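/- For every natural number k and every real λ > 0, the (2k)-th derivative of the function x ↦ 1/(e^x − 1) at λ equals the convergent series Σ_{P=1}^∞ P^{2k} · e^{−λP}; that is, iteratedDeriv (2k) (fun x => (Real.exp x − 1)⁻¹) λ = ∑'_{P : ℕ⁺} (P : ℝ)^{2k} · Real.exp (−λ·P). -/

import Mathlib

/-!
For `x > 0`, `1/(eˣ - 1) = ∑_{P ≥ 1} e^{-xP}` is a geometric series. Differentiating termwise
(justified on `x > x₀/2` by the summable majorant `P^{n+1} e^{-x₀P/2}`) gives
`(d/dx)ⁿ 1/(eˣ - 1) = (-1)ⁿ ∑_{P ≥ 1} Pⁿ e^{-xP}`, and the sign disappears for even `n`.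
-/

open Real Set

lemma summable_pnat_pow_mul_exp_neg_mul (n : ℕ) {x : ℝ} (hx : 0 < x) :
    Summable fun P : ℕ+ => ((P : ℕ) : ℝ) ^ n * exp (-(x * (P : ℕ))) := by
  simpa [Function.comp_def, neg_mul] using
    (summable_pow_mul_exp_neg_nat_mul n hx).comp_injective PNat.coe_injective

lemma tsum_pnat_exp_neg_mul {x : ℝ} (hx : 0 < x) :
    ∑' P : ℕ+, exp (-(x * (P : ℕ))) = (exp x - 1)⁻¹ := by
  have hr : exp (-x) < 1 := exp_lt_one_iff.mpr (neg_lt_zero.mpr hx)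
  have hsucc (n : ℕ) : exp (-(x * ((n + 1 : ℕ) : ℝ))) = exp (-x) * exp (-x) ^ n := by
    rw [← exp_nat_mul, ← exp_add]; push_cast; ring_nf
  have hex : 1 < exp x := one_lt_exp_iff.mpr hx
  rw [tsum_pnat_eq_tsum_succ (f := fun n : ℕ => exp (-(x * n))), funext hsucc, tsum_mul_left,
    tsum_geometric_of_lt_one (exp_pos _).le hr, exp_neg]
  field_simp [(sub_pos.mpr hex).ne']

lemma hasDerivAt_pow_mul_exp_neg_mul (n : ℕ) (p y : ℝ) :
    HasDerivAt (fun y => p ^ n * exp (-(y * p))) (-(p ^ (n + 1) * exp (-(y * p)))) y := by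
  have h := ((((hasDerivAt_id' y).mul_const p).neg).exp).const_mul (p ^ n)
  exact h.congr_deriv (by simp only [Pi.neg_apply]; ring)

lemma hasDerivAt_tsum_pnat_pow_mul_exp_neg_mul (n : ℕ) {x : ℝ} (hx : 0 < x) :
    HasDerivAt (fun y => ∑' P : ℕ+, ((P : ℕ) : ℝ) ^ n * exp (-(y * (P : ℕ))))
      (-∑' P : ℕ+, ((P : ℕ) : ℝ) ^ (n + 1) * exp (-(x * (P : ℕ)))) x := by
  have hx2 : x / 2 < x := half_lt_self hx
  have hbound (P : ℕ+) (y : ℝ) (hy : y ∈ Ioi (x / 2)) :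
      ‖-(((P : ℕ) : ℝ) ^ (n + 1) * exp (-(y * (P : ℕ))))‖ ≤
        ((P : ℕ) : ℝ) ^ (n + 1) * exp (-(x / 2 * (P : ℕ))) := by
    rw [norm_neg, norm_of_nonneg (by positivity)]
    gcongr
    exact hy.le
  rw [← tsum_neg]
  exact hasDerivAt_tsum_of_isPreconnected (summable_pnat_pow_mul_exp_neg_mul (n + 1) (half_pos hx))
    isOpen_Ioi isPreconnected_Ioi (fun P y _ => hasDerivAt_pow_mul_exp_neg_mul n _ y) hbound
    hx2 (summable_pnat_pow_mul_exp_neg_mul n hx) hx2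

lemma iteratedDeriv_inv_exp_sub_one_eqOn (n : ℕ) :
    EqOn (iteratedDeriv n fun x => (exp x - 1)⁻¹)
      (fun x => (-1) ^ n * ∑' P : ℕ+, ((P : ℕ) : ℝ) ^ n * exp (-(x * (P : ℕ)))) (Ioi 0) := by
  induction n with
  | zero =>
    intro x hx
    simpa only [iteratedDeriv_zero, pow_zero, one_mul] using (tsum_pnat_exp_neg_mul hx).symm
  | succ n ih =>
    intro x hx
    rw [iteratedDeriv_succ, (ih.eventuallyEq_of_mem (Ioi_mem_nhds hx)).deriv_eq,
      ((hasDerivAt_tsum_pnat_pow_mul_exp_neg_mul n hx).const_mul _).deriv, pow_succ]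
    ring

theorem iteratedDeriv_inv_exp_sub_one_eq_tsum
    (k : ℕ) (l : ℝ) (hl : 0 < l) :
    Summable (fun P : ℕ+ => ((P : ℕ) : ℝ) ^ (2 * k) * Real.exp (-(l * ((P : ℕ) : ℝ))))
      ∧
    iteratedDeriv (2 * k) (fun x : ℝ => (Real.exp x - 1)⁻¹) l =
      ∑' P : ℕ+, ((P : ℕ) : ℝ) ^ (2 * k) * Real.exp (-(l * ((P : ℕ) : ℝ))) := by
  refine ⟨summable_pnat_pow_mul_exp_neg_mul _ hl, ?_⟩
  rw [iteratedDeriv_inv_exp_sub_one_eqOn (2 * k) hl]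
  simp only [pow_mul, neg_one_sq, one_pow, one_mul]
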